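/- Let V be a real vector space of dimension 2. Define the Ricci map ρ : R(V) → (bilinear forms on V) by ρ(R)(x, y) := trace(v ↦ R(x, v, y)), and let ρ_s(R)(x,y) = (1/2)(ρ(R)(x,y) + ρ(R)(y,x)) and ρ_a(R)(x,y) = (1/2)(ρ(R)(x,y) − ρ(R)(y,x)) be its symmetric and antisymmetric parts. Then the linear map R ↦ (ρ_s(R), ρ_a(R)) is a linear isomorphism from R(V) onto the direct sum of the space of symmetric bilinear forms on V and the space of alternating bilinear forms on V. -/

import Mathlib

variable (V : Type*) [AddCommGroup V] [Module ℝ V]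

/-- `R(V)`: curvature-like tensors, i.e. trilinear maps `R : V³ → V` antisymmetric in
their first two arguments and satisfying the linear Bianchi identity. -/
def CurvLike : Submodule ℝ (V →ₗ[ℝ] V →ₗ[ℝ] V →ₗ[ℝ] V) where
  carrier := {R | (∀ x y z : V, R x y z = - R y x z) ∧
    (∀ x y z : V, R x y z + R z x y + R y z x = 0)}
  add_mem' := by
    rintro a b ⟨ha1, ha2⟩ ⟨hb1, hb2⟩
    refine ⟨fun x y z => ?_, fun x y z => ?_⟩
    · simp only [LinearMap.add_apply]
      rw [ha1 x y z, hb1 x y z]; abel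
    · have h := congrArg₂ (· + ·) (ha2 x y z) (hb2 x y z)
      simp only [add_zero] at h
      simp only [LinearMap.add_apply]
      rw [← h]; abel
  zero_mem' := by
    refine ⟨fun x y z => ?_, fun x y z => ?_⟩ <;> simp
  smul_mem' := by
    rintro c a ⟨ha1, ha2⟩
    refine ⟨fun x y z => ?_, fun x y z => ?_⟩
    · simp only [LinearMap.smul_apply]
      rw [ha1 x y z, smul_neg]
    · simp only [LinearMap.smul_apply, ← smul_add]
      rw [ha2 x y z, smul_zero]

/-- Symmetric bilinear forms on `V`. -/
noncomputable def SymBilin : Submodule ℝ (V →ₗ[ℝ] V →ₗ[ℝ] ℝ) where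
  carrier := {B | ∀ x y : V, B x y = B y x}
  add_mem' := by
    intro a b ha hb
    exact fun x y => by simp [ha x y, hb x y]
  zero_mem' := by intro x y; simp
  smul_mem' := by
    intro c a ha
    exact fun x y => by simp [ha x y]

/-- Alternating (antisymmetric) bilinear forms on `V`. -/
noncomputable def AltBilin : Submodule ℝ (V →ₗ[ℝ] V →ₗ[ℝ] ℝ) where
  carrier := {ω | ∀ x y : V, ω x y = - ω y x}
  add_mem' := by
    intro a b ha hb
    intro x y
    simp only [LinearMap.add_apply]
    rw [ha x y, hb x y]; ring
  zero_mem' := by intro x y; simp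
  smul_mem' := by
    intro c a ha
    intro x y
    simp only [LinearMap.smul_apply]
    rw [ha x y, smul_neg]

/-- The Ricci contraction `ρ(R)(x,y) = trace (v ↦ R(x,v,y))`. -/
noncomputable def Ricci (R : V →ₗ[ℝ] V →ₗ[ℝ] V →ₗ[ℝ] V) (x y : V) : ℝ :=
  LinearMap.trace ℝ V ((R x).flip y)

/-! In dimension 2 the Ricci contraction `ρ` is already a linear isomorphism from `R(V)` onto
all bilinear forms; splitting a bilinear form into its symmetric and alternating parts then gives
the theorem. `ρ` is injective because an antisymmetric `R` is determined by `R(e₀, e₁, ·)`, whose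
two coordinates are `ρ(e₀, ·)` and `-ρ(e₁, ·)`. A preimage of `T` is
`R_T(x, y)z = T(x, z)y - T(y, z)x`, whose Ricci form is `(dim V - 1) T`; its Bianchi sum is the
cyclic sum `ω(x, z)y + ω(z, y)x + ω(y, x)z` of the alternating form `ω = T - Tᵀ`, which vanishes
because a plane carries no nonzero alternating trilinear map. -/

open Module

variable {V}

lemma trace_eq_repr_add_repr {R M : Type*} [CommRing R] [AddCommGroup M] [Module R M]
    (b : Basis (Fin 2) R M) (f : M →ₗ[R] M) :
    LinearMap.trace R M f = b.repr (f (b 0)) 0 + b.repr (f (b 1)) 1 := by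
  rw [LinearMap.trace_eq_matrix_trace R b, Matrix.trace_fin_two, LinearMap.toMatrix_apply,
    LinearMap.toMatrix_apply]

theorem AltBilin.smul_add_smul_add_smul_eq_zero (b : Basis (Fin 2) ℝ V)
    {ω : V →ₗ[ℝ] V →ₗ[ℝ] ℝ} (hω : ω ∈ AltBilin V) (x y z : V) :
    ω x y • z + ω y z • x + ω z x • y = 0 := by
  have hdiag : ∀ v, ω v v = 0 := fun v => by linarith [hω v v]
  rw [← b.sum_repr x, ← b.sum_repr y, ← b.sum_repr z]
  simp only [Fin.sum_univ_two, map_add, map_smul, LinearMap.add_apply, LinearMap.smul_apply,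
    hdiag, hω (b 1) (b 0), smul_eq_mul]
  module

variable (V) in
noncomputable def ricciForm :
    (V →ₗ[ℝ] V →ₗ[ℝ] V →ₗ[ℝ] V) →ₗ[ℝ] V →ₗ[ℝ] V →ₗ[ℝ] ℝ :=
  LinearMap.llcomp ℝ V (V →ₗ[ℝ] V →ₗ[ℝ] V) (V →ₗ[ℝ] ℝ)
    ((LinearMap.llcomp ℝ V (V →ₗ[ℝ] V) ℝ (LinearMap.trace ℝ V)) ∘ₗ LinearMap.lflip.toLinearMap)

@[simp] lemma ricciForm_apply (R : V →ₗ[ℝ] V →ₗ[ℝ] V →ₗ[ℝ] V) (x y : V) :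
    ricciForm V R x y = Ricci V R x y := rfl

theorem eq_zero_of_ricciForm_eq_zero (b : Basis (Fin 2) ℝ V)
    {R : V →ₗ[ℝ] V →ₗ[ℝ] V →ₗ[ℝ] V} (hR : ∀ x y z, R x y z = -R y x z)
    (hρ : ricciForm V R = 0) : R = 0 := by
  have := IsAddTorsionFree.of_isTorsionFree ℝ V
  have hdiag : ∀ x z, R x x z = 0 := fun x z => self_eq_neg.mp (hR x x z)
  have h01 : ∀ z, R (b 0) (b 1) z = 0 := by
    intro z
    have h0 := LinearMap.congr_fun₂ hρ (b 0) z
    have h1 := LinearMap.congr_fun₂ hρ (b 1) z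
    simp only [ricciForm_apply, Ricci, LinearMap.zero_apply, trace_eq_repr_add_repr b,
      LinearMap.flip_apply, hdiag, hR (b 1) (b 0), map_zero, map_neg, Finsupp.coe_zero,
      Pi.zero_apply, Finsupp.coe_neg, Pi.neg_apply, zero_add, add_zero, neg_eq_zero] at h0 h1
    refine b.ext_elem fun i => ?_
    fin_cases i <;> simp [h0, h1]
  refine b.ext fun i => b.ext fun j => LinearMap.ext fun z => ?_
  fin_cases i <;> fin_cases j <;> simp [hdiag, h01, hR (b 1) (b 0)]

variable (V) in
noncomputable def curvOfBilin (T : V →ₗ[ℝ] V →ₗ[ℝ] ℝ) : V →ₗ[ℝ] V →ₗ[ℝ] V →ₗ[ℝ] V :=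
  LinearMap.smulRightₗ ∘ₗ T - (LinearMap.smulRightₗ ∘ₗ T).flip

@[simp] lemma curvOfBilin_apply (T : V →ₗ[ℝ] V →ₗ[ℝ] ℝ) (x y z : V) :
    curvOfBilin V T x y z = T x z • y - T y z • x := rfl

lemma ricci_curvOfBilin [Module.Finite ℝ V] (T : V →ₗ[ℝ] V →ₗ[ℝ] ℝ) (x y : V) :
    Ricci V (curvOfBilin V T) x y = (finrank ℝ V - 1) * T x y := by
  have : (curvOfBilin V T x).flip y = T x y • LinearMap.id - (T.flip y).smulRight x := by
    ext; simp
  rw [Ricci, this, map_sub, map_smul, LinearMap.trace_id, LinearMap.trace_smulRight]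
  simp; ring

theorem curvOfBilin_mem (b : Basis (Fin 2) ℝ V) (T : V →ₗ[ℝ] V →ₗ[ℝ] ℝ) :
    curvOfBilin V T ∈ CurvLike V := by
  refine ⟨fun x y z => ?_, fun x y z => ?_⟩
  · simp only [curvOfBilin_apply, neg_sub]
  · have hω : T - T.flip ∈ AltBilin V := fun x y => by simp
    have := AltBilin.smul_add_smul_add_smul_eq_zero b hω x z y
    simp only [curvOfBilin_apply, LinearMap.sub_apply, LinearMap.flip_apply, sub_smul] at this ⊢
    linear_combination (norm := module) this

theorem ricciForm_curvLike_bijective (hdim : finrank ℝ V = 2) :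
    Function.Bijective ((ricciForm V).domRestrict (CurvLike V)) := by
  have := Module.finite_of_finrank_eq_succ hdim
  let b := Module.finBasisOfFinrankEq ℝ V hdim
  refine ⟨fun R R' h => Subtype.ext ?_, fun T => ?_⟩
  · have hanti : ∀ x y z, (R.1 - R'.1) x y z = -(R.1 - R'.1) y x z := fun x y z => by
      simp only [LinearMap.sub_apply, R.2.1 x y z, R'.2.1 x y z, neg_sub_neg, neg_sub]
    refine sub_eq_zero.mp (eq_zero_of_ricciForm_eq_zero b hanti ?_)
    exact (map_sub (ricciForm V) _ _).trans (sub_eq_zero.mpr h)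
  · refine ⟨⟨curvOfBilin V T, curvOfBilin_mem b T⟩, LinearMap.ext₂ fun x y => ?_⟩
    norm_num [ricci_curvOfBilin, hdim]

variable (V) in
noncomputable def symPart : (V →ₗ[ℝ] V →ₗ[ℝ] ℝ) →ₗ[ℝ] SymBilin V :=
  LinearMap.codRestrict (SymBilin V)
    ((2⁻¹ : ℝ) • (LinearMap.id + LinearMap.lflip.toLinearMap)) fun B x y => by simp [add_comm]

variable (V) in
noncomputable def altPart : (V →ₗ[ℝ] V →ₗ[ℝ] ℝ) →ₗ[ℝ] AltBilin V :=
  LinearMap.codRestrict (AltBilin V)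
    ((2⁻¹ : ℝ) • (LinearMap.id + (-1 : ℝ) • LinearMap.lflip.toLinearMap)) fun B x y => by simp

@[simp] lemma symPart_apply (B : V →ₗ[ℝ] V →ₗ[ℝ] ℝ) (x y : V) :
    (symPart V B : V →ₗ[ℝ] V →ₗ[ℝ] ℝ) x y = 2⁻¹ * (B x y + B y x) := rfl

@[simp] lemma altPart_apply (B : V →ₗ[ℝ] V →ₗ[ℝ] ℝ) (x y : V) :
    (altPart V B : V →ₗ[ℝ] V →ₗ[ℝ] ℝ) x y = 2⁻¹ * (B x y - B y x) := by
  simp [altPart]; ring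

variable (V) in
noncomputable def symAltEquiv : (V →ₗ[ℝ] V →ₗ[ℝ] ℝ) ≃ₗ[ℝ] SymBilin V × AltBilin V where
  __ := (symPart V).prod (altPart V)
  invFun p := p.1 + p.2
  left_inv B := by ext; simp; ring
  right_inv := fun ⟨⟨S, hS⟩, ⟨ω, hω⟩⟩ => by ext x y <;> simp [hS y x, hω y x] <;> ring

theorem curvLike_equiv_symBilin_prod_altBilin_general
    (V : Type*) [AddCommGroup V] [Module ℝ V]
    (hdim : Module.finrank ℝ V = 2) :
    ∃ e : CurvLike V ≃ₗ[ℝ] (SymBilin V × AltBilin V),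
      ∀ (R : CurvLike V) (x y : V),
        ((e R).1).1 x y = (2 : ℝ)⁻¹ * (Ricci V R.1 x y + Ricci V R.1 y x) ∧
        ((e R).2).1 x y = (2 : ℝ)⁻¹ * (Ricci V R.1 x y - Ricci V R.1 y x) :=
  ⟨(LinearEquiv.ofBijective _ (ricciForm_curvLike_bijective hdim)).trans (symAltEquiv V),
    fun _ _ _ => ⟨rfl, altPart_apply _ _ _⟩⟩

/-- If `dim V = 2`, the map `R ↦ (ρ_s(R), ρ_a(R))`, sending a curvature-like tensor to
the symmetric and antisymmetric parts of its Ricci contraction, is a linear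
isomorphism from `R(V)` onto (symmetric bilinear forms) ⊕ (alternating bilinear
forms). -/
theorem curvLike_equiv_symBilin_prod_altBilin
    (V : Type*) [AddCommGroup V] [Module ℝ V] [FiniteDimensional ℝ V]
    (hdim : Module.finrank ℝ V = 2) :
    ∃ e : CurvLike V ≃ₗ[ℝ] (SymBilin V × AltBilin V),
      ∀ (R : CurvLike V) (x y : V),
        ((e R).1).1 x y = (2 : ℝ)⁻¹ * (Ricci V R.1 x y + Ricci V R.1 y x) ∧
        ((e R).2).1 x y = (2 : ℝ)⁻¹ * (Ricci V R.1 x y - Ricci V R.1 y x) :=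
  curvLike_equiv_symBilin_prod_altBilin_general V hdim
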